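/- arXiv:2311.14937 — 6 statements merged into one kernel-verified Lean document; each statement's English description precedes it below -/
import Mathlib

section
/- Let N be a positive integer. If s1, s2, s3, s4 are integers with 0 ≤ s_i ≤ √(N/2) for i = 1,2,3,4, and (N+s1)^3 + (N+s2)^3 = (N+s3)^3 + (N+s4)^3, then {s1, s2} = {s3, s4}. -/
lemma sq_bound_of_sqrt (N s : ℤ) (hN : 1 ≤ N) (hs : 0 ≤ s)
    (hb : (s : ℝ) ≤ Real.sqrt ((N : ℝ) / 2)) : 2 * s ^ 2 ≤ N := by
  have hN2 : (0 : ℝ) ≤ (N : ℝ) / 2 := by positivity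
  have h : ((s : ℝ)) ^ 2 ≤ (N : ℝ) / 2 := by
    have := Real.sq_sqrt hN2
    nlinarith [Real.sqrt_nonneg ((N : ℝ) / 2), (by exact_mod_cast hs : (0:ℝ) ≤ (s:ℝ))]
  have : (2 * (s : ℝ) ^ 2) ≤ (N : ℝ) := by linarith
  exact_mod_cast this

theorem cubes_short_interval_sidon (N : ℤ) (hN : 1 ≤ N)
    (s1 s2 s3 s4 : ℤ)
    (h1 : 0 ≤ s1) (h2 : 0 ≤ s2) (h3 : 0 ≤ s3) (h4 : 0 ≤ s4)
    (hb1 : (s1 : ℝ) ≤ Real.sqrt ((N : ℝ) / 2))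
    (hb2 : (s2 : ℝ) ≤ Real.sqrt ((N : ℝ) / 2))
    (hb3 : (s3 : ℝ) ≤ Real.sqrt ((N : ℝ) / 2))
    (hb4 : (s4 : ℝ) ≤ Real.sqrt ((N : ℝ) / 2))
    (heq : (N + s1) ^ 3 + (N + s2) ^ 3 = (N + s3) ^ 3 + (N + s4) ^ 3) :
    (s1 = s3 ∧ s2 = s4) ∨ (s1 = s4 ∧ s2 = s3) := by
  have q1 := sq_bound_of_sqrt N s1 hN h1 hb1
  have q2 := sq_bound_of_sqrt N s2 hN h2 hb2
  have q3 := sq_bound_of_sqrt N s3 hN h3 hb3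
  have q4 := sq_bound_of_sqrt N s4 hN h4 hb4
  -- sums equal
  have hsum : s1 + s2 = s3 + s4 := by
    by_contra hne
    rcases lt_or_gt_of_ne hne with h | h
    · have hd : s3 + s4 ≥ s1 + s2 + 1 := by omega
      nlinarith [mul_nonneg (mul_nonneg (by linarith : (0:ℤ) ≤ 3*N) (by linarith : (0:ℤ) ≤ s3+s4-s1-s2-1)) (by linarith : (0:ℤ) ≤ s3+s4+s1+s2+1),
        mul_nonneg (by linarith : (0:ℤ) ≤ 3*N) (sq_nonneg (s3-s4)),
        mul_nonneg (by linarith : (0:ℤ) ≤ 3*N) (by linarith : (0:ℤ) ≤ N - 2*s1^2),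
        mul_nonneg (by linarith : (0:ℤ) ≤ 3*N) (by linarith : (0:ℤ) ≤ N - 2*s2^2),
        pow_nonneg h3 3, pow_nonneg h4 3,
        mul_nonneg h1 (by linarith : (0:ℤ) ≤ N - 2*s1^2),
        mul_nonneg h2 (by linarith : (0:ℤ) ≤ N - 2*s2^2),
        mul_nonneg (by linarith : (0:ℤ) ≤ N) (by nlinarith : (0:ℤ) ≤ 3*(s1+s2)^2 + 5*(s1+s2) + 3),
        mul_pos (by linarith : (0:ℤ) < N) (by linarith : (0:ℤ) < N),
        mul_nonneg (mul_nonneg (by positivity : (0:ℤ) ≤ 6*N*N) h3) h4]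
    · have hd : s1 + s2 ≥ s3 + s4 + 1 := by omega
      nlinarith [mul_nonneg (mul_nonneg (by linarith : (0:ℤ) ≤ 3*N) (by linarith : (0:ℤ) ≤ s1+s2-s3-s4-1)) (by linarith : (0:ℤ) ≤ s1+s2+s3+s4+1),
        mul_nonneg (by linarith : (0:ℤ) ≤ 3*N) (sq_nonneg (s1-s2)),
        mul_nonneg (by linarith : (0:ℤ) ≤ 3*N) (by linarith : (0:ℤ) ≤ N - 2*s3^2),
        mul_nonneg (by linarith : (0:ℤ) ≤ 3*N) (by linarith : (0:ℤ) ≤ N - 2*s4^2),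
        pow_nonneg h1 3, pow_nonneg h2 3,
        mul_nonneg h3 (by linarith : (0:ℤ) ≤ N - 2*s3^2),
        mul_nonneg h4 (by linarith : (0:ℤ) ≤ N - 2*s4^2),
        mul_nonneg (by linarith : (0:ℤ) ≤ N) (by nlinarith : (0:ℤ) ≤ 3*(s3+s4)^2 + 5*(s3+s4) + 3),
        mul_pos (by linarith : (0:ℤ) < N) (by linarith : (0:ℤ) < N),
        mul_nonneg (mul_nonneg (by positivity : (0:ℤ) ≤ 6*N*N) h1) h2]
  -- products equal
  have hprod : s1 * s2 = s3 * s4 := by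
    have hu : (0:ℤ) < 2 * N + s1 + s2 := by linarith
    have key : (2 * N + s1 + s2) * (3 * ((N + s1) * (N + s2)) ) = (2 * N + s1 + s2) * (3 * ((N + s3) * (N + s4))) := by
      have : s4 = s1 + s2 - s3 := by omega
      subst this
      ring_nf
      ring_nf at heq
      linarith
    have hc := mul_left_cancel₀ (ne_of_gt hu) key
    have h3 : 3 * (s1 * s2) = 3 * (s3 * s4) := by linear_combination hc - 3 * N * hsum
    omega
  have : (s1 - s3) * (s1 - s4) = 0 := by linear_combination s1 * hsum - hprod
  rcases mul_eq_zero.mp this with h | h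
  · left; constructor <;> omega
  · right; constructor <;> omega
end

section
/- There are infinitely many pairs (X, Y) of positive integers satisfying 7X^2 + 114 = Y^2. -/
private def pellF : ℕ → ℤ × ℤ
  | 0 => (1, 11)
  | n + 1 => (8 * (pellF n).1 + 3 * (pellF n).2, 21 * (pellF n).1 + 8 * (pellF n).2)

private lemma pellF_spec (n : ℕ) :
    0 < (pellF n).1 ∧ 0 < (pellF n).2 ∧ 7 * (pellF n).1 ^ 2 + 114 = (pellF n).2 ^ 2 := by
  induction n with
  | zero => norm_num [pellF]
  | succ n ih =>
    obtain ⟨hx, hy, h⟩ := ih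
    refine ⟨?_, ?_, ?_⟩ <;> simp only [pellF] <;> nlinarith [hx, hy, h]

private lemma pellF_mono : StrictMono (fun n => (pellF n).1) := by
  apply strictMono_nat_of_lt_succ
  intro n
  obtain ⟨hx, hy, _⟩ := pellF_spec n
  show (pellF n).1 < 8 * (pellF n).1 + 3 * (pellF n).2
  linarith

theorem pell_infinitely_many_solutions :
    {p : ℤ × ℤ | 0 < p.1 ∧ 0 < p.2 ∧ 7 * p.1 ^ 2 + 114 = p.2 ^ 2}.Infinite := by
  apply Set.infinite_of_injective_forall_mem (f := pellF)
  · intro a b hab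
    exact pellF_mono.injective (congrArg Prod.fst hab)
  · exact pellF_spec
end

section
/- Let N be large and k a positive integer with k ≤ N. Suppose m = u^3 + v^3 with N ≤ u, v ≤ N + k. Then u + v divides 4m, and (4m)^{1/3} ≤ u + v and (4m)^{1/3} − (u+v) ≤ 6(N+k)k^2 / (12N^2); in particular if 6(N+k)k^2 ≤ 12N^2·k^2/N then 0 ≤ (4m)^{1/3} − (u+v) < k^2/N. -/
set_option maxHeartbeats 1000000


theorem divisor_localization (N k u v m : ℕ)
    (hN : 1 ≤ N) (hk : 0 < k) (hkN : k ≤ N)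
    (hu1 : N ≤ u) (hu2 : u ≤ N + k) (hv1 : N ≤ v) (hv2 : v ≤ N + k)
    (hm : m = u ^ 3 + v ^ 3) :
    (u + v) ∣ 4 * m ∧
      ((u : ℝ) + v) ≤ ((4 * m : ℕ) : ℝ) ^ ((1 : ℝ) / 3) ∧
      ((4 * m : ℕ) : ℝ) ^ ((1 : ℝ) / 3) - ((u : ℝ) + v) ≤
        6 * ((N : ℝ) + k) * k ^ 2 / (12 * (N : ℝ) ^ 2) ∧
      (6 * ((N : ℝ) + k) * k ^ 2 ≤ 12 * (N : ℝ) ^ 2 * k ^ 2 / N →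
        0 ≤ ((4 * m : ℕ) : ℝ) ^ ((1 : ℝ) / 3) - ((u : ℝ) + v) ∧
        ((4 * m : ℕ) : ℝ) ^ ((1 : ℝ) / 3) - ((u : ℝ) + v) < (k : ℝ) ^ 2 / N) := by
  have hNR : (0:ℝ) < N := by exact_mod_cast hN
  have hkR : (0:ℝ) < k := by exact_mod_cast hk
  have hkNR : (k:ℝ) ≤ N := by exact_mod_cast hkN
  have hbound : (k:ℝ) ^ 2 / (2 * N) ≤ 6 * ((N:ℝ) + k) * k ^ 2 / (12 * (N:ℝ) ^ 2) := by
    rw [div_le_div_iff₀ (by positivity) (by positivity)]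
    nlinarith [mul_nonneg hNR.le (pow_nonneg hkR.le 3)]
  set s : ℝ := (u:ℝ) + v with hs_def
  set x : ℝ := ((4 * m : ℕ) : ℝ) ^ ((1 : ℝ) / 3) with hx_def
  have hc : (0:ℝ) ≤ ((4*m:ℕ):ℝ) := Nat.cast_nonneg _
  have hx3 : x ^ 3 = ((4*m:ℕ):ℝ) := by
    rw [hx_def, ← Real.rpow_natCast (((4*m:ℕ):ℝ) ^ ((1:ℝ)/3)) 3,
      ← Real.rpow_mul hc]
    norm_num
  have hkey : ((4*m:ℕ):ℝ) = s ^ 3 + 3 * ((u:ℝ) - v) ^ 2 * s := by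
    rw [hm]; push_cast; ring
  have huR1 : (N:ℝ) ≤ u := by exact_mod_cast hu1
  have huR2 : (u:ℝ) ≤ N + k := by exact_mod_cast hu2
  have hvR1 : (N:ℝ) ≤ v := by exact_mod_cast hv1
  have hvR2 : (v:ℝ) ≤ N + k := by exact_mod_cast hv2
  have hd2 : ((u:ℝ) - v) ^ 2 ≤ (k:ℝ) ^ 2 := by nlinarith
  have hsN : 2 * (N:ℝ) ≤ s := by rw [hs_def]; linarith
  have hspos : 0 < s := by linarith
  have hxnn : 0 ≤ x := Real.rpow_nonneg hc _
  -- s ≤ x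
  have h1 : s ≤ x := by
    have h3 : s ^ 3 ≤ x ^ 3 := by
      rw [hx3, hkey]; nlinarith
    exact le_of_pow_le_pow_left₀ (by norm_num) hxnn h3
  -- gap bound
  have hgap : x ≤ s + (k:ℝ) ^ 2 / (2 * N) := by
    set c : ℝ := (k:ℝ) ^ 2 / (2 * N) with hc_def
    have hcpos : 0 < c := by positivity
    have hc' : 2 * (N:ℝ) * c = (k:ℝ) ^ 2 := by
      rw [hc_def]; field_simp
    have h3 : x ^ 3 ≤ (s + c) ^ 3 := by
      rw [hx3, hkey]
      nlinarith [sq_nonneg s, sq_nonneg c, mul_pos hspos hcpos,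
        mul_le_mul_of_nonneg_left hsN (le_of_lt hcpos)]
    exact le_of_pow_le_pow_left₀ (by norm_num) (by positivity) h3
  refine ⟨?_, h1, by linarith, fun _ => ⟨by linarith, ?_⟩⟩
  · rw [← Int.natCast_dvd_natCast]
    push_cast [hm]
    exact ⟨((u:ℤ)+v)^2 + 3*((u:ℤ)-v)^2, by ring⟩
  · have hlt : (k:ℝ) ^ 2 / (2 * N) < (k:ℝ) ^ 2 / N :=
      div_lt_div_of_pos_left (by positivity) hNR (by linarith)
    linarith
end

section
/- Suppose that for every pair 0 < β < α^2 < 1 the number of divisors of any positive integer m in [m^α, m^α + m^β] is O(1/(α^2−β)). Then for every ε ∈ (0, 2/3) there is a constant C such that: for all large N, every integer m has at most C/ε ordered representations m = u^3 + v^3 with N ≤ u, v ≤ N + N^{2/3−ε}. -/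
/-!
If `u, v ∈ [N, N + h]` with `h = N^{2/3-ε}` and `u³ + v³ = m`, then `d = u + v` divides `4m`, and
`4m = d³ + 3d(u - v)²` puts `d³` in `[4m - 12Nh², 4m]`. Hence `d` lies in `[L, L + 4h²/N]` where
`L³ = 4m - 12Nh²`, an interval of length at most `(4m)^{1/9-δ/2}` for `δ = min(ε, 1/9)`, since
`4m ≥ 8N³`. Writing `L = (4m)^α`, we have `α ≥ 1/3 - δ/6`, so the divisor hypothesis bounds the
number of such `d` by `O(1/δ)`; and each `d` comes from at most two pairs `(u, v)`, because `d` and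
`u³ + v³` determine `uv`.
-/

open Finset Real

def cubeSumReps (N H m : ℕ) : Finset (ℕ × ℕ) :=
  (Icc N (N + H) ×ˢ Icc N (N + H)).filter fun p => p.1 ^ 3 + p.2 ^ 3 = m

@[simp]
theorem mem_cubeSumReps {N H m u v : ℕ} :
    (u, v) ∈ cubeSumReps N H m ↔
      (N ≤ u ∧ u ≤ N + H) ∧ (N ≤ v ∧ v ≤ N + H) ∧ u ^ 3 + v ^ 3 = m := by
  simp [cubeSumReps, and_assoc]

noncomputable def divisorsIn (m : ℕ) (a b : ℝ) : Finset ℕ :=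
  m.divisors.filter fun d => a ≤ d ∧ (d : ℝ) ≤ b

def DivisorBoundInShortIntervals (C₀ : ℝ) : Prop :=
  ∀ α β : ℝ, 0 < α → α < 1 → 0 < β → β < α ^ 2 → ∀ m : ℕ, 0 < m →
    (#(divisorsIn m ((m : ℝ) ^ α) ((m : ℝ) ^ α + (m : ℝ) ^ β)) : ℝ) ≤ C₀ / (α ^ 2 - β)

theorem eq_or_eq_swap_of_add_eq_of_cube_add_eq {R : Type*} [CommRing R] [IsDomain R] [CharZero R]
    {u v x y : R} (hs : x + y = u + v) (hs₀ : u + v ≠ 0) (hc : x ^ 3 + y ^ 3 = u ^ 3 + v ^ 3) :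
    (x = u ∧ y = v) ∨ (x = v ∧ y = u) := by
  have hy : y = u + v - x := by linear_combination hs
  subst hy
  have hprod : 3 * (u + v) * ((x - u) * (x - v)) = 0 := by linear_combination hc
  rcases mul_eq_zero.mp hprod with h | h
  · exact absurd h (mul_ne_zero (by norm_num) hs₀)
  rcases mul_eq_zero.mp h with h | h
  · exact .inl ⟨by linear_combination h, by linear_combination -h⟩
  · exact .inr ⟨by linear_combination h, by linear_combination -h⟩

theorem Nat.eq_or_eq_swap_of_add_eq_of_cube_add_eq {u v x y : ℕ} (hs : x + y = u + v)
    (hc : x ^ 3 + y ^ 3 = u ^ 3 + v ^ 3) : (x = u ∧ y = v) ∨ (x = v ∧ y = u) := by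
  rcases Nat.eq_zero_or_pos (u + v) with h₀ | h₀
  · omega
  have := _root_.eq_or_eq_swap_of_add_eq_of_cube_add_eq (R := ℤ) (u := u) (v := v) (x := x) (y := y)
    (by exact_mod_cast hs) (by omega) (by exact_mod_cast hc)
  omega

theorem card_filter_add_eq_le_two {m d : ℕ} {S : Finset (ℕ × ℕ)}
    (hS : ∀ p ∈ S, p.1 ^ 3 + p.2 ^ 3 = m) : #{p ∈ S | p.1 + p.2 = d} ≤ 2 := by
  obtain hempty | ⟨⟨x, y⟩, hxy⟩ := {p ∈ S | p.1 + p.2 = d}.eq_empty_or_nonempty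
  · simp [hempty]
  rw [mem_filter] at hxy
  calc #{p ∈ S | p.1 + p.2 = d} ≤ #{(x, y), (y, x)} := by
        refine card_le_card fun ⟨u, v⟩ huv => ?_
        rw [mem_filter] at huv
        rcases Nat.eq_or_eq_swap_of_add_eq_of_cube_add_eq (huv.2.trans hxy.2.symm)
          ((hS _ huv.1).trans (hS _ hxy.1).symm) with ⟨rfl, rfl⟩ | ⟨rfl, rfl⟩ <;> simp
    _ ≤ 2 := card_le_two

theorem card_le_two_mul_card_of_add_mem {m : ℕ} {S : Finset (ℕ × ℕ)} {T : Finset ℕ}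
    (hS : ∀ p ∈ S, p.1 ^ 3 + p.2 ^ 3 = m) (hT : ∀ p ∈ S, p.1 + p.2 ∈ T) : #S ≤ 2 * #T :=
  card_le_mul_card_image_of_maps_to hT 2 fun _ _ => card_filter_add_eq_le_two hS

theorem add_pow_three_le_four_mul_add_pow_three {K : Type*} [Field K] [LinearOrder K]
    [IsStrictOrderedRing K] {u v : K} (huv : 0 ≤ u + v) : (u + v) ^ 3 ≤ 4 * (u ^ 3 + v ^ 3) := by
  nlinarith [mul_nonneg huv (sq_nonneg (u - v))]

theorem four_mul_add_pow_three_le {K : Type*} [Field K] [LinearOrder K]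
    [IsStrictOrderedRing K] {N h u v : K} (hh : h ≤ N) (hu : N ≤ u) (hu' : u ≤ N + h)
    (hv : N ≤ v) (hv' : v ≤ N + h) : 4 * (u ^ 3 + v ^ 3) ≤ (u + v) ^ 3 + 12 * N * h ^ 2 := by
  have hsq : (u - v) ^ 2 ≤ h ^ 2 := sq_le_sq' (by linarith) (by linarith)
  have hsum : 3 * (u + v) ≤ 12 * N := by linarith
  nlinarith [mul_le_mul hsum hsq (sq_nonneg _) (by linarith)]

theorem le_add_div_of_pow_three_le_add {K : Type*} [Field K] [LinearOrder K]
    [IsStrictOrderedRing K] {L x Δ : K} (hL : 0 < L) (hLx : L ≤ x) (hx : x ^ 3 ≤ L ^ 3 + Δ) :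
    x ≤ L + Δ / (3 * L ^ 2) := by
  have key : (x - L) * (3 * L ^ 2) ≤ Δ := by
    nlinarith [mul_le_mul_of_nonneg_left (show 3 * L ^ 2 ≤ x ^ 2 + x * L + L ^ 2 by nlinarith)
      (sub_nonneg.mpr hLx)]
  rw [← sub_le_iff_le_add', le_div_iff₀ (by positivity)]
  exact key

theorem add_mem_divisorsIn {N H m u v : ℕ} {h L : ℝ} (hN : 0 < N) (hH : (H : ℝ) ≤ h)
    (hhN : h ≤ N) (hNL : (N : ℝ) ≤ L) (hL : L ^ 3 = 4 * m - 12 * N * h ^ 2)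
    (huv : (u, v) ∈ cubeSumReps N H m) :
    u + v ∈ divisorsIn (4 * m) L (L + 4 * h ^ 2 / N) := by
  obtain ⟨⟨hu, hu'⟩, ⟨hv, hv'⟩, rfl⟩ := mem_cubeSumReps.mp huv
  push_cast at hL ⊢
  have hN' : (0 : ℝ) < N := by exact_mod_cast hN
  have hL0 : 0 < L := hN'.trans_le hNL
  have hu'' : (u : ℝ) ≤ N + h := by
    have : (u : ℝ) ≤ N + H := by exact_mod_cast hu'
    linarith
  have hv'' : (v : ℝ) ≤ N + h := by
    have : (v : ℝ) ≤ N + H := by exact_mod_cast hv'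
    linarith
  have hupper :=
    four_mul_add_pow_three_le hhN (by exact_mod_cast hu) hu'' (by exact_mod_cast hv) hv''
  have hlower :=
    add_pow_three_le_four_mul_add_pow_three (K := ℝ) (u := u) (v := v) (by positivity)
  have hLd : L ≤ u + v := by
    rw [← pow_le_pow_iff_left₀ hL0.le (by positivity) three_ne_zero, hL]
    linarith
  have hu0 : 0 < u := hN.trans_le hu
  refine mem_filter.mpr ⟨Nat.mem_divisors.mpr ⟨?_, by positivity⟩, ?_, ?_⟩
  · exact (Odd.nat_add_dvd_pow_add_pow u v (by decide)).mul_left 4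
  · exact_mod_cast hLd
  · calc ((u + v : ℕ) : ℝ) ≤ L + 12 * N * h ^ 2 / (3 * L ^ 2) := by
          push_cast
          exact le_add_div_of_pow_three_le_add hL0 hLd (by linarith)
      _ ≤ L + 4 * h ^ 2 / N := by
          gcongr L + ?_
          rw [div_le_div_iff₀ (by positivity) hN']
          nlinarith [pow_le_pow_left₀ hN'.le hNL 2, sq_nonneg h]

theorem divisorsIn_mono {m : ℕ} {a a' b b' : ℝ} (ha : a' ≤ a) (hb : b ≤ b') :
    divisorsIn m a b ⊆ divisorsIn m a' b' :=
  monotone_filter_right _ fun _ _ hd => ⟨ha.trans hd.1, hd.2.trans hb⟩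

theorem card_divisorsIn_le {C₀ δ : ℝ} (hdiv : DivisorBoundInShortIntervals C₀) (hC₀ : 0 ≤ C₀)
    (hδ : 0 < δ) (hδ' : δ < 2 / 9) {M : ℕ} (hM : 4 ≤ (M : ℝ) ^ (δ / 2)) {L w : ℝ}
    (hL : M ≤ 4 * L ^ 3) (hL' : L ^ 3 ≤ M) (hw : w ≤ (M : ℝ) ^ (1 / 9 - δ / 2)) :
    (#(divisorsIn M L (L + w)) : ℝ) ≤ 3 * C₀ / δ := by
  have hM1 : (1 : ℝ) < M := by
    by_contra! h
    linarith [rpow_le_one (Nat.cast_nonneg M) h (by positivity : 0 ≤ δ / 2)]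
  have hL0 : 0 < L := by
    by_contra! h
    nlinarith [pow_nonneg (neg_nonneg.mpr h) 3]
  set α := logb M L
  have hMα : (M : ℝ) ^ α = L := rpow_logb (by linarith) hM1.ne' hL0
  have hα : 1 / 3 - δ / 6 ≤ α := by
    rw [← rpow_le_rpow_left_iff hM1, hMα,
      ← pow_le_pow_iff_left₀ (by positivity) hL0.le three_ne_zero,
      ← rpow_mul_natCast (by positivity)]
    calc (M : ℝ) ^ ((1 / 3 - δ / 6) * (3 : ℕ)) = M / M ^ (δ / 2) := by
          rw [show (1 / 3 - δ / 6) * ((3 : ℕ) : ℝ) = 1 - δ / 2 by push_cast; ring,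
            rpow_sub (by linarith), rpow_one]
      _ ≤ M / 4 := div_le_div_of_nonneg_left (by positivity) (by norm_num) hM
      _ ≤ L ^ 3 := by linarith
  have hα1 : α < 1 := by
    rw [← rpow_lt_rpow_left_iff hM1, hMα, rpow_one,
      ← pow_lt_pow_iff_left₀ hL0.le (by positivity) three_ne_zero]
    have hM3 : (M : ℝ) < M ^ 3 := by
      nlinarith [mul_pos (zero_lt_one.trans hM1) (sub_pos.mpr hM1)]
    linarith
  have hgap : δ / 3 ≤ α ^ 2 - (1 / 9 - δ / 2) := by
    nlinarith [mul_le_mul hα hα (by linarith) (by linarith)]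
  calc (#(divisorsIn M L (L + w)) : ℝ)
        ≤ #(divisorsIn M (M ^ α) (M ^ α + M ^ (1 / 9 - δ / 2))) := by
        rw [hMα]
        exact_mod_cast card_le_card (divisorsIn_mono le_rfl (by linarith))
    _ ≤ C₀ / (α ^ 2 - (1 / 9 - δ / 2)) := hdiv α _ (by linarith) hα1 (by linarith) (by linarith) M
        (by exact_mod_cast (zero_lt_one.trans hM1))
    _ ≤ C₀ / (δ / 3) := div_le_div_of_nonneg_left hC₀ (by positivity) hgap
    _ = 3 * C₀ / δ := by ring

theorem four_mul_sq_rpow_div_le {N ε δ : ℝ} (hN1 : 1 ≤ N) (hN : 4 ≤ N ^ (δ / 2)) (hδε : δ ≤ ε) :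
    4 * (N ^ (2 / 3 - ε)) ^ 2 / N ≤ N ^ (1 / 3 - 3 * δ / 2) := by
  have hN0 : 0 < N := by linarith
  calc 4 * (N ^ (2 / 3 - ε)) ^ 2 / N = 4 * N ^ (1 / 3 - 2 * ε) := by
        rw [← rpow_mul_natCast hN0.le, mul_div_assoc, ← rpow_sub_one hN0.ne']
        congr 2; push_cast; ring
    _ ≤ N ^ (δ / 2) * N ^ (1 / 3 - 2 * ε) := by gcongr
    _ = N ^ (δ / 2 + (1 / 3 - 2 * ε)) := (rpow_add hN0 _ _).symm
    _ ≤ N ^ (1 / 3 - 3 * δ / 2) := rpow_le_rpow_of_exponent_le hN1 (by linarith)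

theorem card_cubeSumReps_le {C₀ ε δ : ℝ} (hdiv : DivisorBoundInShortIntervals C₀) (hC₀ : 0 ≤ C₀)
    (hδ : 0 < δ) (hδ' : δ < 2 / 9) (hδε : δ ≤ ε) {N : ℕ} (hN : 4 ≤ (N : ℝ) ^ (δ / 2)) (m : ℕ) :
    (#(cubeSumReps N ⌊(N : ℝ) ^ (2 / 3 - ε)⌋₊ m) : ℝ) ≤ 6 * C₀ / δ := by
  set h := (N : ℝ) ^ (2 / 3 - ε)
  obtain hempty | ⟨⟨u, v⟩, huv⟩ := (cubeSumReps N ⌊h⌋₊ m).eq_empty_or_nonempty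
  · rw [hempty, card_empty, Nat.cast_zero]
    positivity
  have hN1 : (1 : ℝ) ≤ N := by
    by_contra! hN1
    linarith [rpow_le_one (Nat.cast_nonneg N) hN1.le (by positivity : 0 ≤ δ / 2)]
  have hw := four_mul_sq_rpow_div_le hN1 hN hδε
  have hhN : 4 * h ^ 2 ≤ N ^ 2 := by
    have hpow : (N : ℝ) ^ (1 / 3 - 3 * δ / 2) ≤ N := by
      simpa using rpow_le_rpow_of_exponent_le hN1 (by linarith : 1 / 3 - 3 * δ / 2 ≤ 1)
    nlinarith [(div_le_iff₀ (by positivity)).mp (hw.trans hpow)]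
  have hm : 8 * (N : ℝ) ^ 3 ≤ 4 * m := by
    obtain ⟨⟨hu, -⟩, ⟨hv, -⟩, rfl⟩ := mem_cubeSumReps.mp huv
    have : 2 * N ^ 3 ≤ u ^ 3 + v ^ 3 := by
      have := Nat.pow_le_pow_left hu 3
      have := Nat.pow_le_pow_left hv 3
      omega
    have : (2 * N ^ 3 : ℝ) ≤ (u ^ 3 + v ^ 3 : ℕ) := by exact_mod_cast this
    linarith
  obtain ⟨L, hL0, hL⟩ : ∃ L : ℝ, 0 ≤ L ∧ L ^ 3 = 4 * m - 12 * N * h ^ 2 :=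
    ⟨_, rpow_nonneg (by nlinarith) _, rpow_inv_natCast_pow (by nlinarith) three_ne_zero⟩
  have hNL : (N : ℝ) ≤ L := by
    rw [← pow_le_pow_iff_left₀ (by positivity) hL0 three_ne_zero]
    nlinarith
  have hM : (N : ℝ) ^ 3 ≤ ((4 * m : ℕ) : ℝ) := by push_cast; nlinarith
  calc (#(cubeSumReps N ⌊h⌋₊ m) : ℝ) ≤ 2 * #(divisorsIn (4 * m) L (L + 4 * h ^ 2 / N)) := by
        exact_mod_cast card_le_two_mul_card_of_add_mem (fun _ hp => (mem_filter.mp hp).2)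
          fun ⟨_, _⟩ hp => add_mem_divisorsIn (by exact_mod_cast (zero_lt_one.trans_le hN1))
            (Nat.floor_le (by positivity)) (by nlinarith) hNL hL hp
    _ ≤ 2 * (3 * C₀ / δ) := by
        gcongr
        refine card_divisorsIn_le hdiv hC₀ hδ hδ' ?_ (by push_cast; nlinarith)
          (by push_cast; nlinarith) ?_
        · exact hN.trans (rpow_le_rpow (by positivity) (by nlinarith) (by positivity))
        · refine hw.trans ?_
          rw [show 1 / 3 - 3 * δ / 2 = ((3 : ℕ) : ℝ) * (1 / 9 - δ / 2) by push_cast; ring,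
            rpow_natCast_mul (by positivity)]
          exact rpow_le_rpow (by positivity) hM (by linarith)
    _ = 6 * C₀ / δ := by ring

theorem energy_bound_from_divisor_conjecture
    (hdiv : ∃ C₀ : ℝ, 0 < C₀ ∧ ∀ α β : ℝ, 0 < α → α < 1 → 0 < β → β < α ^ 2 →
      ∀ m : ℕ, 0 < m →
        (((m.divisors.filter
            (fun d : ℕ => (m : ℝ) ^ α ≤ (d : ℝ) ∧
              (d : ℝ) ≤ (m : ℝ) ^ α + (m : ℝ) ^ β)).card : ℝ)) ≤
          C₀ / (α ^ 2 - β)) :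
    ∀ ε : ℝ, 0 < ε → ε < 2 / 3 →
      ∃ C : ℝ, 0 < C ∧ ∃ N₀ : ℕ, ∀ N : ℕ, N₀ ≤ N → ∀ m : ℕ,
        (((((Finset.Icc N (N + ⌊(N : ℝ) ^ (2 / 3 - ε)⌋₊)) ×ˢ
            (Finset.Icc N (N + ⌊(N : ℝ) ^ (2 / 3 - ε)⌋₊))).filter
              (fun p => p.1 ^ 3 + p.2 ^ 3 = m)).card : ℝ)) ≤ C / ε := by
  obtain ⟨C₀, hC₀, hdiv⟩ := hdiv
  intro ε hε hε'
  set δ := min ε (1 / 9)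
  have hδ : 0 < δ := lt_min hε (by norm_num)
  obtain ⟨N₀, hN₀⟩ := Filter.eventually_atTop.mp <|
    ((tendsto_rpow_atTop (half_pos hδ)).comp tendsto_natCast_atTop_atTop).eventually_ge_atTop 4
  refine ⟨36 * C₀, by positivity, N₀, fun N hN m => ?_⟩
  calc _ ≤ 6 * C₀ / δ := card_cubeSumReps_le hdiv hC₀.le hδ
          ((min_le_right _ _).trans_lt (by norm_num)) (min_le_left _ _) (hN₀ N hN) m
    _ ≤ 36 * C₀ / ε := by
        have : ε / 6 ≤ δ := le_min (by linarith) (by linarith)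
        rw [div_le_div_iff₀ hδ hε]
        nlinarith
end

section
/- If a set A ⊆ ℤ is a Λ_p set for some p > 2, i.e., ‖f‖_p ≤ C‖f‖_2 for all trigonometric polynomials f with frequencies in A, then |A ∩ [−N, N]| ≤ C' N^{2/p} for some constant C' depending on C and p and all N ≥ 1. -/
/-!
Test the `Λ_p` inequality on `f(x) = ∑_{n ∈ A, |n| ≤ N} e(nx)`. By orthogonality of the
characters, `‖f‖₂² = |A_N|`. On the other hand, for `0 ≤ x ≤ 1/(16N)` each `e(nx)` lies within
`2π|n|x ≤ 1/2` of `1`, so `|f(x)| ≥ |A_N|/2` there and `‖f‖_p ≥ (16N)^{-1/p} |A_N| / 2`.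
Hence `|A_N| ≤ 2C (16N)^{1/p} |A_N|^{1/2}`, i.e. `|A_N| ≤ 4C² (16N)^{2/p}`.
-/

open Complex intervalIntegral MeasureTheory Set
open scoped Real

noncomputable def expSum (S : Finset ℤ) (x : ℝ) : ℂ :=
  ∑ n ∈ S, Complex.exp (2 * π * I * n * x)

lemma continuous_expSum (S : Finset ℤ) : Continuous (expSum S) := by
  unfold expSum; fun_prop

lemma integral_exp_two_pi_I_int_mul (k : ℤ) :
    ∫ x in (0:ℝ)..1, Complex.exp (2 * π * I * k * x) = if k = 0 then 1 else 0 := by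
  split_ifs with hk
  · simp [hk]
  · have hc : (2 * π * I * k : ℂ) ≠ 0 := by simp [Real.pi_ne_zero, I_ne_zero, hk]
    have hperiod : Complex.exp (2 * π * I * k) = 1 := by
      rw [← exp_int_mul_two_pi_mul_I k]; ring_nf
    simp [integral_exp_mul_complex hc, hperiod]

lemma integral_norm_expSum_sq (S : Finset ℤ) :
    ∫ x in (0:ℝ)..1, ‖expSum S x‖ ^ 2 = S.card := by
  have hexpand : ∀ x : ℝ, ((‖expSum S x‖ ^ 2 : ℝ) : ℂ) =
      ∑ n ∈ S, ∑ m ∈ S, Complex.exp (2 * π * I * (n - m : ℤ) * x) := by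
    intro x
    rw [ofReal_pow, ← mul_conj', expSum, map_sum, Finset.sum_mul_sum]
    refine Finset.sum_congr rfl fun n _ => Finset.sum_congr rfl fun m _ => ?_
    rw [← exp_conj, ← Complex.exp_add]
    congr 1
    simp only [map_mul, conj_I, conj_ofReal, map_ofNat, map_intCast]
    push_cast
    ring
  apply ofReal_injective
  rw [← intervalIntegral.integral_ofReal]
  simp_rw [hexpand]
  rw [integral_finsetSum fun n _ => (by fun_prop : Continuous _).intervalIntegrable _ _]
  have hrow : ∀ n ∈ S,
      ∫ x in (0:ℝ)..1, ∑ m ∈ S, Complex.exp (2 * π * I * (n - m : ℤ) * x) = 1 := by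
    intro n hn
    rw [integral_finsetSum fun m _ => (by fun_prop : Continuous _).intervalIntegrable _ _]
    simp only [integral_exp_two_pi_I_int_mul, sub_eq_zero, Finset.sum_ite_eq, if_pos hn]
  rw [Finset.sum_congr rfl hrow, Finset.sum_const, nsmul_one, ofReal_natCast]

lemma norm_exp_two_pi_I_mul_sub_one_le (t : ℝ) :
    ‖Complex.exp (2 * π * I * t) - 1‖ ≤ 2 * π * |t| := by
  have h := Real.norm_exp_I_mul_ofReal_sub_one_le (x := 2 * π * t)
  rwa [Real.norm_eq_abs, abs_mul, abs_of_pos Real.two_pi_pos,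
    show I * ↑(2 * π * t) = 2 * π * I * t by push_cast; ring] at h

lemma card_mul_sub_le_norm_sum {ι E : Type*} [NormedAddCommGroup E] [NormedSpace ℝ E]
    {S : Finset ι} {z : ι → E} {v : E} {ε : ℝ} (hz : ∀ i ∈ S, ‖z i - v‖ ≤ ε) :
    S.card * (‖v‖ - ε) ≤ ‖∑ i ∈ S, z i‖ := by
  have hdev : ‖∑ i ∈ S, (z i - v)‖ ≤ S.card * ε :=
    (norm_sum_le _ _).trans (by simpa using Finset.sum_le_sum hz)
  have hsplit : ∑ i ∈ S, z i = S.card • v + ∑ i ∈ S, (z i - v) := by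
    rw [Finset.sum_sub_distrib, Finset.sum_const, add_sub_cancel]
  have := norm_sub_le_norm_add (S.card • v) (∑ i ∈ S, (z i - v))
  rw [← hsplit, RCLike.norm_nsmul ℝ, nsmul_eq_mul] at this
  linarith

lemma card_div_two_le_norm_expSum {S : Finset ℤ} {N : ℕ} (hS : ∀ n ∈ S, |n| ≤ N) {x : ℝ}
    (hx₀ : 0 ≤ x) (hx : 16 * N * x ≤ 1) : (S.card / 2 : ℝ) ≤ ‖expSum S x‖ := by
  have hterm : ∀ n ∈ S, ‖Complex.exp (2 * π * I * n * x) - 1‖ ≤ 1 / 2 := by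
    intro n hn
    have hnN : |(n : ℝ)| ≤ N := by exact_mod_cast hS n hn
    calc ‖Complex.exp (2 * π * I * n * x) - 1‖ ≤ 2 * π * (|(n : ℝ)| * x) := by
          simpa [mul_assoc, abs_mul, abs_of_nonneg hx₀] using
            norm_exp_two_pi_I_mul_sub_one_le (n * x)
      _ ≤ 2 * 4 * (N * x) := by gcongr; exact Real.pi_le_four
      _ ≤ 1 / 2 := by linarith
  have := card_mul_sub_le_norm_sum hterm
  rw [norm_one] at this
  rw [expSum]
  linarith

lemma sub_mul_le_integral_of_le_on_Icc {f : ℝ → ℝ} {a b c m : ℝ}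
    (hf : IntervalIntegrable f volume a b) (hac : a ≤ c) (hcb : c ≤ b)
    (hf₀ : ∀ x ∈ Ioc a b, 0 ≤ f x) (hm : ∀ x ∈ Icc a c, m ≤ f x) :
    (c - a) * m ≤ ∫ x in a..b, f x :=
  calc (c - a) * m = ∫ _ in a..c, m := by simp
    _ ≤ ∫ x in a..c, f x :=
      integral_mono_on hac intervalIntegrable_const
        (hf.mono_set (uIcc_subset_uIcc left_mem_uIcc (mem_uIcc_of_le hac hcb))) hm
    _ ≤ ∫ x in a..b, f x :=
      integral_mono_interval le_rfl hac hcb (ae_restrict_of_forall_mem measurableSet_Ioc hf₀) hf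

lemma card_div_two_rpow_le_mul_integral_norm_expSum_rpow {S : Finset ℤ} {N : ℕ} (hN : 1 ≤ N)
    (hS : ∀ n ∈ S, |n| ≤ N) {p : ℝ} (hp : 0 ≤ p) :
    (S.card / 2 : ℝ) ^ p ≤ 16 * N * ∫ x in (0:ℝ)..1, ‖expSum S x‖ ^ p := by
  have h16N : (1 : ℝ) ≤ 16 * N := by
    have : (1 : ℝ) ≤ N := by exact_mod_cast hN
    linarith
  have hlow : ∀ x ∈ Icc 0 (16 * N : ℝ)⁻¹, (S.card / 2 : ℝ) ^ p ≤ ‖expSum S x‖ ^ p :=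
    fun x hx => Real.rpow_le_rpow (by positivity)
      (card_div_two_le_norm_expSum hS hx.1
        ((le_inv_mul_iff₀ (by positivity)).mp (by rw [mul_one]; exact hx.2))) hp
  have h := sub_mul_le_integral_of_le_on_Icc
    (((continuous_expSum S).norm.rpow_const fun _ => .inr hp).intervalIntegrable _ _)
    (by positivity) (inv_le_one_of_one_le₀ h16N) (fun x _ => by positivity) hlow
  rw [sub_zero, inv_mul_eq_div, div_le_iff₀ (by positivity)] at h
  linarith

lemma le_sq_of_le_mul_sqrt {s K : ℝ} (h : s ≤ K * √s) : s ≤ K ^ 2 := by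
  rcases (Real.sqrt_nonneg s).eq_or_lt with h0 | hpos
  · nlinarith [Real.sqrt_eq_zero'.mp h0.symm]
  · have hs : s = √s * √s := (Real.mul_self_sqrt (Real.sqrt_pos.mp hpos).le).symm
    have hK : √s ≤ K := le_of_mul_le_mul_right (hs ▸ h) hpos
    calc s = √s ^ 2 := by rw [sq, ← hs]
      _ ≤ K ^ 2 := by gcongr

theorem lambda_p_density (A : Set ℤ) (p : ℝ) (hp : 2 < p) (C : ℝ)
    (hA : ∀ (S : Finset ℤ), ↑S ⊆ A → ∀ a : ℤ → ℂ,
      (∫ x in (0:ℝ)..1,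
          ‖∑ n ∈ S, a n * Complex.exp (2 * Real.pi * Complex.I * n * x)‖ ^ p) ^ (1/p) ≤
        C * (∫ x in (0:ℝ)..1,
          ‖∑ n ∈ S, a n * Complex.exp (2 * Real.pi * Complex.I * n * x)‖ ^ 2) ^ ((1:ℝ)/2)) :
    ∃ C' : ℝ, ∀ N : ℕ, 1 ≤ N →
      ((A ∩ Set.Icc (-(N : ℤ)) N).ncard : ℝ) ≤ C' * (N : ℝ) ^ (2 / p) := by
  have hp₀ : 0 < p := two_pos.trans hp
  refine ⟨4 * C ^ 2 * 16 ^ (2 / p), fun N hN => ?_⟩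
  have hfin : (A ∩ Icc (-(N : ℤ)) N).Finite := (finite_Icc _ _).inter_of_right A
  set S := hfin.toFinset
  have hSA : ↑S ⊆ A := fun n hn => (hfin.mem_toFinset.mp hn).1
  have hSN : ∀ n ∈ S, |n| ≤ N := fun n hn => abs_le.mpr (hfin.mem_toFinset.mp hn).2
  have hΛ : (∫ x in (0:ℝ)..1, ‖expSum S x‖ ^ p) ^ (1 / p) ≤
      C * (∫ x in (0:ℝ)..1, ‖expSum S x‖ ^ 2) ^ ((1:ℝ) / 2) := by
    simpa only [expSum, Pi.one_apply, one_mul] using hA S hSA 1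
  rw [integral_norm_expSum_sq, ← Real.sqrt_eq_rpow] at hΛ
  have hcard : (S.card / 2 : ℝ) ≤ (16 * N) ^ (1 / p) * (C * √S.card) := calc
    (S.card / 2 : ℝ) = ((S.card / 2 : ℝ) ^ p) ^ (1 / p) := by
      rw [← Real.rpow_mul (by positivity), mul_one_div_cancel hp₀.ne', Real.rpow_one]
    _ ≤ (16 * N * ∫ x in (0:ℝ)..1, ‖expSum S x‖ ^ p) ^ (1 / p) := by
      gcongr
      exact card_div_two_rpow_le_mul_integral_norm_expSum_rpow hN hSN hp₀.le
    _ = (16 * N) ^ (1 / p) * (∫ x in (0:ℝ)..1, ‖expSum S x‖ ^ p) ^ (1 / p) :=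
      Real.mul_rpow (by positivity) (integral_nonneg zero_le_one fun x _ => by positivity)
    _ ≤ (16 * N) ^ (1 / p) * (C * √S.card) := by gcongr
  have hsq := le_sq_of_le_mul_sqrt (s := S.card) (K := 2 * C * (16 * N) ^ (1 / p))
    (by linarith only [hcard])
  rw [Set.ncard_eq_toFinset_card _ hfin]
  convert hsq using 1
  rw [mul_pow, mul_pow, ← Real.rpow_mul_natCast (by positivity),
    Real.mul_rpow (by positivity) (by positivity)]
  ring_nf
end

section
/- The function r(m) = #{(a,b) ∈ ℕ² : a, b ≥ 1, a^3 + b^3 = m} is unbounded: for every B there exists m with r(m) > B. -/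
/-!
Tangent lines on the cubic `x³ + y³ = 9`, starting from `(2, 1)`, produce infinitely many
rational points: in integer coordinates `(a : b : c)` the exponent of `2` in `a` grows by one at
each step while `b` stays odd, so the points never degenerate and are pairwise distinct. Infinitely
many of them lie in the open first quadrant `s = (x / y)³ > 0`: an orbit staying in `s < 0` would
eventually be trapped in `(-3/2, -1/2)`, around the fixed point `s = -1` (the point at infinity),
which repels, since `(s + 1)²` at least doubles at each step there. Clearing the denominators of
`B + 1` positive rational points on `x³ + y³ = 9` gives `B + 1` representations of some `9 D³` as
a sum of two positive cubes.
-/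

namespace SumTwoCubes

section TangentCubeRatio

variable {K : Type*} [Field K] [LinearOrder K] [IsStrictOrderedRing K]

/-- If `(x, y)` lies on `x³ + y³ = m` and `s = (x / y)³`, the tangent line at `(x, y)` meets the
curve again at a point with cube ratio `tangentCubeRatio s`. -/
def tangentCubeRatio (s : K) : K := -s * (s + 2) ^ 3 / (2 * s + 1) ^ 3

theorem tangentCubeRatio_add_one {s : K} (hs : 2 * s + 1 ≠ 0) :
    tangentCubeRatio s + 1 = (s + 1) * ((1 - s) / (2 * s + 1)) ^ 3 := by
  unfold tangentCubeRatio
  rw [div_add_one (pow_ne_zero 3 hs), div_pow, ← mul_div_assoc]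
  congr 1
  ring

theorem neg_two_lt_and_lt_neg_half_of_tangentCubeRatio_neg {s : K} (hs : s < 0)
    (hfs : tangentCubeRatio s < 0) : -2 < s ∧ s < -(1 / 2) := by
  unfold tangentCubeRatio at hfs
  constructor
  · by_contra! h
    rcases h.lt_or_eq with h | rfl
    · have : 0 < -s * (s + 2) ^ 3 / (2 * s + 1) ^ 3 :=
        div_pos_of_neg_of_neg
          (mul_neg_of_pos_of_neg (by linarith) (Odd.pow_neg (by decide) (by linarith)))
          (Odd.pow_neg (by decide) (by linarith))
      linarith
    · norm_num at hfs
  · by_contra! h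
    rcases h.lt_or_eq with h | h
    · have : 0 < -s * (s + 2) ^ 3 / (2 * s + 1) ^ 3 :=
        div_pos (mul_pos (by linarith) (pow_pos (by linarith) 3)) (pow_pos (by linarith) 3)
      linarith
    · rw [← h] at hfs
      norm_num at hfs

theorem neg_half_lt_tangentCubeRatio {s : K} (h₁ : -2 < s) (h₂ : s ≤ -(3 / 2)) :
    -(1 / 2) < tangentCubeRatio s := by
  have hden : (2 * s + 1) ^ 3 ≤ -8 := by nlinarith [sq_nonneg (2 * s + 1), sq_nonneg (s + 2)]
  have hnum : -s * (s + 2) ^ 3 ≤ 1 / 4 := by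
    have h₀ : 0 ≤ s + 2 := by linarith
    have : (s + 2) ^ 3 ≤ (1 / 2) ^ 3 := pow_le_pow_left₀ h₀ (by linarith) 3
    nlinarith [pow_nonneg h₀ 3]
  unfold tangentCubeRatio
  rw [lt_div_iff_of_neg (by linarith)]
  linarith

theorem two_mul_sq_le_sq_tangentCubeRatio_add_one {s : K} (h₁ : -(3 / 2) < s)
    (h₂ : s < -(1 / 2)) : 2 * (s + 1) ^ 2 ≤ (tangentCubeRatio s + 1) ^ 2 := by
  have hd : 2 * s + 1 < 0 := by linarith
  have hr : (1 - s) / (2 * s + 1) ≤ -(5 / 4) := by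
    rw [div_le_iff_of_neg hd]
    linarith
  have hr6 : 2 ≤ ((1 - s) / (2 * s + 1)) ^ 6 :=
    calc (2 : K) ≤ (5 / 4) ^ 6 := by norm_num
      _ ≤ (-((1 - s) / (2 * s + 1))) ^ 6 := pow_le_pow_left₀ (by norm_num) (by linarith) 6
      _ = ((1 - s) / (2 * s + 1)) ^ 6 := by ring
  rw [tangentCubeRatio_add_one hd.ne]
  calc 2 * (s + 1) ^ 2 ≤ ((1 - s) / (2 * s + 1)) ^ 6 * (s + 1) ^ 2 := by gcongr
    _ = ((s + 1) * ((1 - s) / (2 * s + 1)) ^ 3) ^ 2 := by ring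

theorem infinite_setOf_pos_of_tangentCubeRatio_orbit [Archimedean K] {s : ℕ → K}
    (hs : ∀ n, s (n + 1) = tangentCubeRatio (s n)) (h₀ : ∀ n, s n ≠ 0) (h₁ : ∀ n, s n ≠ -1) :
    {n | 0 < s n}.Infinite := by
  rw [← Nat.frequently_atTop_iff_infinite]
  intro hneg
  obtain ⟨N, hN⟩ := Filter.eventually_atTop.1 hneg
  have hlt : ∀ n ≥ N, s n < 0 := fun n hn => (not_lt.1 (hN n hn)).lt_of_ne (h₀ n)
  have htrap : ∀ n ≥ N, -(3 / 2) < s n ∧ s n < -(1 / 2) := by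
    intro n hn
    obtain ⟨h2, h12⟩ := neg_two_lt_and_lt_neg_half_of_tangentCubeRatio_neg (hlt n hn)
      (hs n ▸ hlt (n + 1) (by omega))
    obtain ⟨-, h12'⟩ := neg_two_lt_and_lt_neg_half_of_tangentCubeRatio_neg
      (hlt (n + 1) (by omega)) (hs (n + 1) ▸ hlt (n + 2) (by omega))
    refine ⟨lt_of_not_ge fun h => ?_, h12⟩
    have := hs n ▸ neg_half_lt_tangentCubeRatio h2 h
    linarith
  have hgrow : ∀ k, 2 ^ k * (s N + 1) ^ 2 ≤ (s (N + k) + 1) ^ 2 := by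
    intro k
    induction k with
    | zero => simp
    | succ k ih =>
      obtain ⟨h1, h2⟩ := htrap (N + k) (by omega)
      calc 2 ^ (k + 1) * (s N + 1) ^ 2 ≤ 2 * (s (N + k) + 1) ^ 2 := by rw [pow_succ]; linarith
        _ ≤ (s (N + (k + 1)) + 1) ^ 2 := by
          rw [← add_assoc, hs]
          exact two_mul_sq_le_sq_tangentCubeRatio_add_one h1 h2
  have hpos : 0 < (s N + 1) ^ 2 := by
    have : s N + 1 ≠ 0 := fun h => h₁ N (by linear_combination h)
    positivity
  obtain ⟨k, hk⟩ := pow_unbounded_of_one_lt (1 / (s N + 1) ^ 2) (one_lt_two : (1 : K) < 2)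
  rw [div_lt_iff₀ hpos] at hk
  obtain ⟨h1, h2⟩ := htrap (N + k) (by omega)
  nlinarith [hgrow k]

theorem pos_and_pos_of_div_pos_of_pow_add_pow_pos {n : ℕ} {x y : K} (hn : Odd n)
    (hxy : 0 < x / y) (h : 0 < x ^ n + y ^ n) : 0 < x ∧ 0 < y := by
  rcases div_pos_iff.1 hxy with hpos | ⟨hx, hy⟩
  · exact hpos
  · linarith [hn.pow_neg hx, hn.pow_neg hy]

end TangentCubeRatio

theorem ne_zero_of_odd {b : ℤ} (hb : Odd b) : b ≠ 0 := by
  rintro rfl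
  simp at hb

theorem eq_of_two_pow_mul_odd_eq {i j : ℕ} {u v : ℤ} (hu : Odd u) (hv : Odd v)
    (h : 2 ^ i * u = 2 ^ j * v) : i = j := by
  have key : ∀ {i j : ℕ} {u v : ℤ}, Odd v → 2 ^ i * u = 2 ^ j * v → i ≤ j := by
    intro i j u v hv h
    by_contra! hji
    have hvu : v = 2 ^ (i - j) * u := by
      apply mul_left_cancel₀ (pow_ne_zero j two_ne_zero)
      rw [← h, ← mul_assoc, ← pow_add, Nat.add_sub_cancel' hji.le]
    refine Int.not_even_iff_odd.2 hv (hvu ▸ Even.mul_right ?_ u)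
    exact (Int.even_pow' (by omega)).2 even_two
  exact (key hv h).antisymm (key hu h.symm)

/-- The third intersection of the tangent line at `(a : b : c)` with `x³ + y³ = m z³`. -/
def tangent : ℤ × ℤ × ℤ → ℤ × ℤ × ℤ
  | (a, b, c) => (a * (a ^ 3 + 2 * b ^ 3), -b * (2 * a ^ 3 + b ^ 3), c * (a ^ 3 - b ^ 3))

/-- The shape of the `k`-th point of the tangent process on `x³ + y³ = m z³`: the parity
conditions keep `c ≠ 0` along the process and tell the points apart. -/
def IsTwoAdicPoint (m : ℤ) (k : ℕ) : ℤ × ℤ × ℤ → Prop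
  | (a, b, c) => a ^ 3 + b ^ 3 = m * c ^ 3 ∧ c ≠ 0 ∧ Odd b ∧ ∃ o, Odd o ∧ a = 2 ^ (k + 1) * o

def toRat : ℤ × ℤ × ℤ → ℚ × ℚ
  | (a, b, c) => (a / c, b / c)

def cubeRatio : ℤ × ℤ × ℤ → ℚ
  | (a, b, _) => ((a : ℚ) / b) ^ 3

namespace IsTwoAdicPoint

variable {m : ℤ} {k : ℕ} {p : ℤ × ℤ × ℤ}

theorem tangent (hp : IsTwoAdicPoint m k p) :
    IsTwoAdicPoint m (k + 1) (SumTwoCubes.tangent p) := by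
  obtain ⟨a, b, c⟩ := p
  obtain ⟨hcurve, hc, hb, o, ho, rfl⟩ := hp
  have ha : Even ((2 : ℤ) ^ (k + 1) * o) := ⟨2 ^ k * o, by ring⟩
  refine ⟨?_, mul_ne_zero hc (ne_zero_of_odd ((ha.pow_of_ne_zero three_ne_zero).sub_odd hb.pow)),
    hb.neg.mul ((even_two_mul _).add_odd hb.pow),
    o * (2 * (2 ^ (3 * k + 1) * o ^ 3) + b ^ 3), ho.mul ((even_two_mul _).add_odd hb.pow), ?_⟩
  · linear_combination (((2 : ℤ) ^ (k + 1) * o) ^ 3 - b ^ 3) ^ 3 * hcurve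
  · ring

theorem cubeRatio_tangent (hp : IsTwoAdicPoint m k p) :
    cubeRatio (SumTwoCubes.tangent p) = tangentCubeRatio (cubeRatio p) := by
  obtain ⟨a, b, c⟩ := p
  obtain ⟨-, -, hb, -⟩ := hp
  have hb0 : (b : ℚ) ≠ 0 := by exact_mod_cast ne_zero_of_odd hb
  have hd : 2 * (a : ℚ) ^ 3 + b ^ 3 ≠ 0 := by
    exact_mod_cast ne_zero_of_odd ((even_two_mul _).add_odd hb.pow)
  simp only [cubeRatio, SumTwoCubes.tangent, tangentCubeRatio]
  push_cast
  field_simp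

theorem cubeRatio_ne_zero (hp : IsTwoAdicPoint m k p) : cubeRatio p ≠ 0 := by
  obtain ⟨a, b, c⟩ := p
  obtain ⟨-, -, hb, o, ho, ha⟩ := hp
  have ha0 : (a : ℚ) ≠ 0 := by
    exact_mod_cast ha ▸ mul_ne_zero (pow_ne_zero _ two_ne_zero) (ne_zero_of_odd ho)
  have hb0 : (b : ℚ) ≠ 0 := by exact_mod_cast ne_zero_of_odd hb
  simp only [cubeRatio]
  positivity

theorem cubeRatio_ne_neg_one (hp : IsTwoAdicPoint m k p) : cubeRatio p ≠ -1 := by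
  obtain ⟨a, b, c⟩ := p
  obtain ⟨-, -, hb, o, -, ha⟩ := hp
  have hb0 : (b : ℚ) ≠ 0 := by exact_mod_cast ne_zero_of_odd hb
  intro h
  have hab : (a : ℚ) / b = -1 := by
    rw [← Odd.pow_inj (by decide : Odd 3), Odd.neg_one_pow (by decide)]
    exact h
  rw [div_eq_iff hb0, neg_one_mul] at hab
  have hab' : a = -b := by exact_mod_cast hab
  exact Int.not_even_iff_odd.2 hb.neg (hab' ▸ ha ▸ ⟨2 ^ k * o, by ring⟩)

theorem toRat_cube_add_cube (hp : IsTwoAdicPoint m k p) :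
    (toRat p).1 ^ 3 + (toRat p).2 ^ 3 = m := by
  obtain ⟨a, b, c⟩ := p
  obtain ⟨hcurve, hc, -⟩ := hp
  have hc' : (c : ℚ) ≠ 0 := by exact_mod_cast hc
  simp only [toRat]
  field_simp
  exact_mod_cast (by linear_combination hcurve)

theorem toRat_pos (hp : IsTwoAdicPoint m k p) (hm : 0 < m) (hs : 0 < cubeRatio p) :
    0 < (toRat p).1 ∧ 0 < (toRat p).2 := by
  refine pos_and_pos_of_div_pos_of_pow_add_pow_pos (by decide : Odd 3) ?_
    (hp.toRat_cube_add_cube ▸ by exact_mod_cast hm)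
  obtain ⟨a, b, c⟩ := p
  obtain ⟨-, hc, -⟩ := hp
  have hc' : (c : ℚ) ≠ 0 := by exact_mod_cast hc
  rw [cubeRatio, Odd.pow_pos_iff (by decide)] at hs
  simpa only [toRat, div_div_div_cancel_right₀ hc'] using hs

theorem eq_of_toRat_eq {m' : ℤ} {l : ℕ} {q : ℤ × ℤ × ℤ} (hp : IsTwoAdicPoint m k p)
    (hq : IsTwoAdicPoint m' l q) (h : toRat p = toRat q) : k = l := by
  obtain ⟨a, b, c⟩ := p
  obtain ⟨a', b', c'⟩ := q
  obtain ⟨-, hc, hb, o, ho, rfl⟩ := hp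
  obtain ⟨-, hc', hb', o', ho', rfl⟩ := hq
  have hcq : (c : ℚ) ≠ 0 := by exact_mod_cast hc
  have hcq' : (c' : ℚ) ≠ 0 := by exact_mod_cast hc'
  simp only [toRat, Prod.mk.injEq, div_eq_div_iff hcq hcq'] at h
  obtain ⟨h₁, h₂⟩ := h
  push_cast at h₁
  have hcross : ((2 : ℤ) ^ (k + 1) * o * b' : ℚ) = 2 ^ (l + 1) * o' * b := by
    apply mul_right_cancel₀ hcq'
    linear_combination b' * h₁ - 2 ^ (l + 1) * o' * h₂
  have := eq_of_two_pow_mul_odd_eq (ho.mul hb') (ho'.mul hb)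
    (by rw [← mul_assoc, ← mul_assoc]; exact_mod_cast hcross)
  omega

end IsTwoAdicPoint

theorem isTwoAdicPoint_iterate_tangent (n : ℕ) : IsTwoAdicPoint 9 n (tangent^[n] (2, 1, 1)) := by
  induction n with
  | zero => exact ⟨by norm_num, one_ne_zero, odd_one, 1, odd_one, by norm_num⟩
  | succ n ih =>
    rw [Function.iterate_succ_apply']
    exact ih.tangent

theorem infinite_setOf_pos_rat_cube_add_cube_eq_nine :
    {p : ℚ × ℚ | 0 < p.1 ∧ 0 < p.2 ∧ p.1 ^ 3 + p.2 ^ 3 = 9}.Infinite := by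
  have hP := isTwoAdicPoint_iterate_tangent
  have hpos : {n | 0 < cubeRatio (tangent^[n] (2, 1, 1))}.Infinite :=
    infinite_setOf_pos_of_tangentCubeRatio_orbit
      (fun n => by rw [Function.iterate_succ_apply', (hP n).cubeRatio_tangent])
      (fun n => (hP n).cubeRatio_ne_zero) (fun n => (hP n).cubeRatio_ne_neg_one)
  refine Set.infinite_of_injOn_mapsTo (f := fun n => toRat (tangent^[n] (2, 1, 1)))
    (fun i _ j _ h => (hP i).eq_of_toRat_eq (hP j) h) (fun n hn => ?_) hpos
  obtain ⟨hx, hy⟩ := (hP n).toRat_pos (by norm_num) hn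
  exact ⟨hx, hy, by exact_mod_cast (hP n).toRat_cube_add_cube⟩

def powSumReps (k M : ℕ) : Set (ℕ × ℕ) := {p | 1 ≤ p.1 ∧ 1 ≤ p.2 ∧ p.1 ^ k + p.2 ^ k = M}

theorem powSumReps_finite {k : ℕ} (hk : k ≠ 0) (M : ℕ) : (powSumReps k M).Finite := by
  refine ((Set.finite_Iic M).prod (Set.finite_Iic M)).subset fun p ⟨_, _, hp⟩ => ?_
  have h₁ := Nat.le_self_pow hk p.1
  have h₂ := Nat.le_self_pow hk p.2
  exact ⟨by simp only [Set.mem_Iic]; omega, by simp only [Set.mem_Iic]; omega⟩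

theorem exists_nat_mul_eq_intCast (T : Finset ℚ) :
    ∃ D : ℕ, 0 < D ∧ ∀ q ∈ T, ∃ z : ℤ, (D : ℚ) * q = z := by
  refine ⟨∏ q ∈ T, q.den, Finset.prod_pos fun q _ => q.den_pos, fun q hq => ?_⟩
  obtain ⟨e, he⟩ := Finset.dvd_prod_of_mem Rat.den hq
  refine ⟨e * q.num, ?_⟩
  rw [he]
  push_cast
  rw [← Rat.den_mul_eq_num]
  ring

theorem card_le_ncard_powSumReps {k m : ℕ} (hk : k ≠ 0) (S : Finset (ℚ × ℚ))
    (hS : ∀ p ∈ S, 0 < p.1 ∧ 0 < p.2 ∧ p.1 ^ k + p.2 ^ k = m) :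
    ∃ M : ℕ, S.card ≤ (powSumReps k M).ncard := by
  obtain ⟨D, hD, hDint⟩ := exists_nat_mul_eq_intCast (S.image Prod.fst ∪ S.image Prod.snd)
  have hfloor : ∀ q ∈ S.image Prod.fst ∪ S.image Prod.snd, 0 < q →
      (⌊(D : ℚ) * q⌋₊ : ℚ) = D * q := by
    intro q hq hq₀
    obtain ⟨z, hz⟩ := hDint q hq
    rw [natCast_floor_eq_intCast_floor (by positivity), hz, Int.floor_intCast]
  have hfst : ∀ p ∈ S, (⌊(D : ℚ) * p.1⌋₊ : ℚ) = D * p.1 := fun p hp =>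
    hfloor _ (Finset.mem_union_left _ (Finset.mem_image_of_mem _ hp)) (hS p hp).1
  have hsnd : ∀ p ∈ S, (⌊(D : ℚ) * p.2⌋₊ : ℚ) = D * p.2 := fun p hp =>
    hfloor _ (Finset.mem_union_right _ (Finset.mem_image_of_mem _ hp)) (hS p hp).2.1
  refine ⟨m * D ^ k, ?_⟩
  rw [← Set.ncard_coe_finset]
  refine Set.ncard_le_ncard_of_injOn (fun p => (⌊(D : ℚ) * p.1⌋₊, ⌊(D : ℚ) * p.2⌋₊))
    (fun p hp => ?_) (fun p hp q hq hpq => ?_) (powSumReps_finite hk _)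
  · obtain ⟨h₁, h₂, hsum⟩ := hS p hp
    refine ⟨?_, ?_, ?_⟩
    · exact_mod_cast (hfst p hp).symm ▸ (by positivity : (0 : ℚ) < D * p.1)
    · exact_mod_cast (hsnd p hp).symm ▸ (by positivity : (0 : ℚ) < D * p.2)
    · have : ((⌊(D : ℚ) * p.1⌋₊ ^ k + ⌊(D : ℚ) * p.2⌋₊ ^ k : ℕ) : ℚ) = (m * D ^ k : ℕ) := by
        push_cast [hfst p hp, hsnd p hp]
        rw [mul_pow, mul_pow, ← mul_add, hsum, mul_comm]
      exact_mod_cast this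
  · obtain ⟨h₁, h₂⟩ := Prod.mk.inj hpq
    have hD0 : (D : ℚ) ≠ 0 := by positivity
    refine Prod.ext (mul_left_cancel₀ hD0 ?_) (mul_left_cancel₀ hD0 ?_)
    · rw [← hfst p hp, ← hfst q hq, h₁]
    · rw [← hsnd p hp, ← hsnd q hq, h₂]

end SumTwoCubes

open SumTwoCubes

theorem sum_two_cubes_representations_unbounded :
    ∀ B : ℕ, ∃ m : ℕ,
      B < {p : ℕ × ℕ | 1 ≤ p.1 ∧ 1 ≤ p.2 ∧ p.1 ^ 3 + p.2 ^ 3 = m}.ncard := by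
  intro B
  obtain ⟨S, hS, hcard⟩ :=
    infinite_setOf_pos_rat_cube_add_cube_eq_nine.exists_subset_card_eq (B + 1)
  obtain ⟨M, hM⟩ := card_le_ncard_powSumReps (m := 9) three_ne_zero S fun p hp => by
    simpa using hS hp
  rw [hcard] at hM
  exact ⟨M, hM⟩
end
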